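/- arXiv:1310.8532 — 2 statements merged into one kernel-verified Lean document; each statement's English description precedes it below -/
import Mathlib

section
/- Suppose f is continuous on (0,∞) and that the generalized failure rate has a finite positive limit: t·f(t)/(1 − F(t)) → l as t → ∞, with 0 < l < ∞. Then t·G(t)/(1 − F(t)) → 1/(1 + l) as t → ∞. (Lemma 3(vi), finite-limit case.) -/
open MeasureTheory Filter Set Topology

/-- The cumulative distribution function `F(t) = ∫₀^t f(γ) dγ`. -/
noncomputable def Fcdf (f : ℝ → ℝ) (t : ℝ) : ℝ := ∫ γ in (0:ℝ)..t, f γ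

/-- The average-power function `G(t) = ∫_t^∞ (1/t − 1/γ) f(γ) dγ`. -/
noncomputable def Gfun (f : ℝ → ℝ) (t : ℝ) : ℝ := ∫ γ in Set.Ioi t, (1/t - 1/γ) * f γ

/-!
Write `T(t) = ∫_t^∞ f = 1 - F(t)` and `H(t) = ∫_t^∞ f(γ)/γ dγ`, so that `t G(t) = T(t) - t H(t)`
and it suffices to show `t H(t) / T(t) → l / (1 + l)`. Both `H` and `T(t)/t` tend to `0`, and the
quotient of their derivatives, `(-f(t)/t) / (-(t f(t) + T(t))/t²) = r(t) / (1 + r(t))` with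
`r(t) = t f(t) / T(t)` the generalized failure rate, tends to `l / (1 + l)`; L'Hôpital's rule
concludes.
-/

theorem hasDerivAt_integral_Ioi {φ : ℝ → ℝ} {a t : ℝ} (hat : a < t)
    (hφ : IntegrableOn φ (Ioi a)) (hφm : StronglyMeasurableAtFilter φ (𝓝 t))
    (hφc : ContinuousAt φ t) :
    HasDerivAt (fun x => ∫ γ in Ioi x, φ γ) (-φ t) t := by
  have hI : HasDerivAt (fun x => ∫ γ in a..x, φ γ) (φ t) t :=
    intervalIntegral.integral_hasDerivAt_right
      ((intervalIntegrable_iff_integrableOn_Ioc_of_le hat.le).2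
        (hφ.mono_set Ioc_subset_Ioi_self)) hφm hφc
  refine (hI.const_sub (∫ γ in Ioi a, φ γ)).congr_of_eventuallyEq ?_
  filter_upwards [Ioi_mem_nhds hat] with x hx
  rw [← intervalIntegral.integral_Ioi_sub_Ioi hφ hx.le, sub_sub_cancel]

theorem tendsto_integral_Ioi_atTop {φ : ℝ → ℝ} {a : ℝ} (hφ : IntegrableOn φ (Ioi a)) :
    Tendsto (fun t => ∫ γ in Ioi t, φ γ) atTop (𝓝 0) := by
  have hempty : ⋂ t : ℝ, Ioi t = ∅ := iInter_eq_empty_iff.2 fun x => ⟨x, lt_irrefl x⟩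
  simpa [hempty] using tendsto_setIntegral_of_antitone (μ := volume)
    (fun _ => measurableSet_Ioi) (fun _ _ h => Ioi_subset_Ioi h) ⟨a, hφ⟩

theorem integrableOn_Ioi_inv_mul {φ : ℝ → ℝ} {a : ℝ} (ha : 0 < a)
    (hφ : IntegrableOn φ (Ioi a)) : IntegrableOn (fun γ => γ⁻¹ * φ γ) (Ioi a) := by
  refine hφ.bdd_mul measurable_inv.aestronglyMeasurable
    (ae_restrict_of_forall_mem measurableSet_Ioi fun γ (hγ : a < γ) => ?_) (c := a⁻¹)
  rw [norm_inv, Real.norm_of_nonneg (ha.trans hγ).le]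
  exact inv_anti₀ ha hγ.le

theorem integral_Ioi_eq_one_sub_Fcdf {f : ℝ → ℝ} (hint : IntegrableOn f (Ioi 0))
    (hone : ∫ γ in Ioi (0:ℝ), f γ = 1) {t : ℝ} (ht : 0 ≤ t) :
    ∫ γ in Ioi t, f γ = 1 - Fcdf f t := by
  rw [Fcdf, ← intervalIntegral.integral_Ioi_sub_Ioi hint ht, hone, sub_sub_cancel]

theorem mul_Gfun_eq {f : ℝ → ℝ} {t : ℝ} (ht : 0 < t) (hf : IntegrableOn f (Ioi t)) :
    t * Gfun f t = (∫ γ in Ioi t, f γ) - t * ∫ γ in Ioi t, γ⁻¹ * f γ := by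
  have hsplit : ∀ γ, (1 / t - 1 / γ) * f γ = t⁻¹ * f γ - γ⁻¹ * f γ := fun γ => by ring
  simp only [Gfun, hsplit]
  rw [integral_sub (hf.const_mul _) (integrableOn_Ioi_inv_mul ht hf), integral_const_mul,
    mul_sub, mul_inv_cancel_left₀ ht.ne']

theorem tendsto_mul_integral_Ioi_inv_mul_div {f : ℝ → ℝ} {l : ℝ}
    (hcont : ContinuousOn f (Ioi 0)) (hint : IntegrableOn f (Ioi 0))
    (hT : ∀ᶠ t in atTop, ∫ γ in Ioi t, f γ ≠ 0) (hl : l + 1 ≠ 0)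
    (hr : Tendsto (fun t => t * f t / ∫ γ in Ioi t, f γ) atTop (𝓝 l)) :
    Tendsto (fun t => t * (∫ γ in Ioi t, γ⁻¹ * f γ) / ∫ γ in Ioi t, f γ) atTop
      (𝓝 (l / (l + 1))) := by
  set T : ℝ → ℝ := fun t => ∫ γ in Ioi t, f γ
  set H : ℝ → ℝ := fun t => ∫ γ in Ioi t, γ⁻¹ * f γ
  set r : ℝ → ℝ := fun t => t * f t / T t
  have hT' : ∀ t > 0, HasDerivAt T (-f t) t := fun t ht =>
    hasDerivAt_integral_Ioi ht hint (hcont.stronglyMeasurableAtFilter isOpen_Ioi t ht)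
      (hcont.continuousAt (Ioi_mem_nhds ht))
  have hH' : ∀ t > 0, HasDerivAt H (-(t⁻¹ * f t)) t := fun t ht =>
    hasDerivAt_integral_Ioi (half_lt_self ht)
      (integrableOn_Ioi_inv_mul (half_pos ht) (hint.mono_set (Ioi_subset_Ioi (half_pos ht).le)))
      (((continuousOn_inv₀.mono fun _ hx => ne_of_gt hx).mul hcont).stronglyMeasurableAtFilter
        isOpen_Ioi t ht)
      ((continuousAt_inv₀ ht.ne').mul (hcont.continuousAt (Ioi_mem_nhds ht)))
  have hr1 : ∀ᶠ t in atTop, r t + 1 ≠ 0 := (hr.add_const 1).eventually_ne hl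
  have hnum : ∀ t, T t ≠ 0 → -f t * t - T t * 1 = -(T t * (r t + 1)) := fun t hTt => by
    simp only [r]
    field_simp
    ring
  have hlim : Tendsto (fun t => H t / (T t / t)) atTop (𝓝 (l / (l + 1))) := by
    refine HasDerivAt.lhopital_zero_atTop (f' := fun t => -(t⁻¹ * f t))
      (g' := fun t => (-f t * t - T t * 1) / t ^ 2)
      (by filter_upwards [eventually_gt_atTop 0] with t ht using hH' t ht)
      (by filter_upwards [eventually_gt_atTop 0] with t ht using
        (hT' t ht).div (hasDerivAt_id t) ht.ne')
      ?_ (tendsto_integral_Ioi_atTop (integrableOn_Ioi_inv_mul one_pos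
        (hint.mono_set (Ioi_subset_Ioi zero_le_one))))
      (by simpa [T, div_eq_mul_inv] using
        (tendsto_integral_Ioi_atTop hint).mul tendsto_inv_atTop_zero)
      ((hr.div (hr.add_const 1) hl).congr' ?_)
    · filter_upwards [eventually_gt_atTop 0, hr1, hT] with t ht hrt hTt
      rw [hnum t hTt]
      exact div_ne_zero (neg_ne_zero.2 (mul_ne_zero hTt hrt)) (by positivity)
    · filter_upwards [hr1, hT] with t hrt hTt
      rw [Pi.div_apply, hnum t hTt]
      field_simp
      rfl
  exact hlim.congr fun t => by rw [div_div_eq_mul_div, mul_comm]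

theorem t_mul_G_div_tail_tendsto_of_GFR_finite_general (f : ℝ → ℝ) (l : ℝ)
    (hcont : ContinuousOn f (Set.Ioi (0:ℝ)))
    (hint : IntegrableOn f (Set.Ioi (0:ℝ)))
    (hone : ∫ γ in Set.Ioi (0:ℝ), f γ = 1)
    (hsupp : ∀ t > (0:ℝ), Fcdf f t < 1)
    (hl : 0 < l)
    (hGFR : Tendsto (fun t => t * f t / (1 - Fcdf f t)) atTop (nhds l)) :
    Tendsto (fun t => t * Gfun f t / (1 - Fcdf f t)) atTop (nhds (1 / (1 + l))) := by
  have htail : ∀ᶠ t in atTop, 0 < t ∧ ∫ γ in Ioi t, f γ = 1 - Fcdf f t := by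
    filter_upwards [eventually_gt_atTop 0] with t ht
    exact ⟨ht, integral_Ioi_eq_one_sub_Fcdf hint hone ht.le⟩
  have hne : ∀ᶠ t in atTop, ∫ γ in Ioi t, f γ ≠ 0 := by
    filter_upwards [htail] with t ⟨ht, hT⟩
    rw [hT]
    exact (sub_pos.2 (hsupp t ht)).ne'
  have hlim := tendsto_mul_integral_Ioi_inv_mul_div hcont hint hne (by positivity)
    (hGFR.congr' (by filter_upwards [htail] with t ⟨_, hT⟩; rw [hT]))
  have hval : 1 - l / (l + 1) = 1 / (1 + l) := by field_simp; ring
  rw [← hval]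
  refine (tendsto_const_nhds.sub hlim).congr' ?_
  filter_upwards [htail, hne] with t ⟨ht, hT⟩ hT0
  rw [← hT, mul_Gfun_eq ht (hint.mono_set (Ioi_subset_Ioi ht.le)), sub_div, div_self hT0]

/-- Lemma 3(vi), finite-limit case: if the generalized failure rate
`t·f(t)/(1 − F(t))` tends to `l ∈ (0,∞)`, then `t·G(t)/(1 − F(t)) → 1/(1 + l)`. -/
theorem t_mul_G_div_tail_tendsto_of_GFR_finite (f : ℝ → ℝ) (l : ℝ)
    (hmeas : Measurable f)
    (hnn : ∀ x, 0 ≤ f x)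
    (hzero : ∀ x ≤ (0:ℝ), f x = 0)
    (hcont : ContinuousOn f (Set.Ioi (0:ℝ)))
    (hint : IntegrableOn f (Set.Ioi (0:ℝ)))
    (hone : ∫ γ in Set.Ioi (0:ℝ), f γ = 1)
    (hsupp : ∀ t > (0:ℝ), Fcdf f t < 1)
    (hl : 0 < l)
    (hGFR : Tendsto (fun t => t * f t / (1 - Fcdf f t)) atTop (nhds l)) :
    Tendsto (fun t => t * Gfun f t / (1 - Fcdf f t)) atTop (nhds (1 / (1 + l))) :=
  t_mul_G_div_tail_tendsto_of_GFR_finite_general f l hcont hint hone hsupp hl hGFR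
end

section
/- Fix K ≥ 1 and an index k, and assume each distribution has infinite support, i.e. F_i(t) < 1 for all t > 0 and all i. Let (λ^{(n)})_n be a sequence of vectors in (0,∞)^K with λ_i^{(n)} → ∞ for every i = 1,…,K. Then the ratio [∫_{λ_k^{(n)}}^∞ (1/λ_k^{(n)} − 1/h) · ∏_{i≠k} F_i((λ_i^{(n)}/λ_k^{(n)})·h) · f_k(h) dh] / [∫_{λ_k^{(n)}}^∞ (1/λ_k^{(n)} − 1/h) f_k(h) dh] tends to 1 as n → ∞. (Asymptotic equivalence (E315): at low power the multi-user power constraint integral coincides with the single-user one.) -/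
/-!
Put `a = λ_k`. On the range of integration `h > a` every argument `(λ_i / a) h` of the
product exceeds `λ_i`, so the product lies between `∏_{i ≠ k} F_i(λ_i)` and `1`. The ratio is
therefore an average of a quantity squeezed between these two bounds against the nonnegative
weight `(1/a - 1/h) f_k(h)`, whose total mass is positive because `F_k(a) < 1`. The lower bound
tends to `1` as every `λ_i → ∞`.
-/

open MeasureTheory Filter Set Topology

section WeightedAverage

variable {α : Type*} [MeasurableSpace α] {μ : Measure α} {s : Set α} {g w : α → ℝ}

theorem setIntegral_mul_div_setIntegral_mem_Icc {c d : ℝ} (hs : MeasurableSet s)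
    (hw : IntegrableOn w s μ) (hw0 : ∀ x ∈ s, 0 ≤ w x) (hpos : 0 < ∫ x in s, w x ∂μ)
    (hg : AEStronglyMeasurable g (μ.restrict s)) (hgs : ∀ x ∈ s, g x ∈ Icc c d) :
    (∫ x in s, g x * w x ∂μ) / ∫ x in s, w x ∂μ ∈ Icc c d := by
  have hgw : IntegrableOn (fun x => g x * w x) s μ :=
    hw.bdd_mul hg (c := max |c| |d|) <| (ae_restrict_mem hs).mono fun x hx => by
      rw [Real.norm_eq_abs]; exact abs_le_max_abs_abs (hgs x hx).1 (hgs x hx).2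
  rw [mem_Icc, le_div_iff₀ hpos, div_le_iff₀ hpos]
  simp only [← integral_const_mul]
  exact ⟨setIntegral_mono_on (hw.const_mul c) hgw hs fun x hx =>
      mul_le_mul_of_nonneg_right (hgs x hx).1 (hw0 x hx),
    setIntegral_mono_on hgw (hw.const_mul d) hs fun x hx =>
      mul_le_mul_of_nonneg_right (hgs x hx).2 (hw0 x hx)⟩

theorem setIntegral_mul_pos (hs : MeasurableSet s) (hw : IntegrableOn w s μ)
    (hw0 : ∀ x ∈ s, 0 ≤ w x) (hgw : IntegrableOn (fun x => g x * w x) s μ)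
    (hg : ∀ x ∈ s, 0 < g x) (hpos : 0 < ∫ x in s, w x ∂μ) :
    0 < ∫ x in s, g x * w x ∂μ := by
  have hgw0 : ∀ x ∈ s, 0 ≤ g x * w x := fun x hx => mul_nonneg (hg x hx).le (hw0 x hx)
  rw [setIntegral_pos_iff_support_of_nonneg_ae ((ae_restrict_mem hs).mono hw0) hw] at hpos
  rw [setIntegral_pos_iff_support_of_nonneg_ae ((ae_restrict_mem hs).mono hgw0) hgw]
  convert hpos using 2
  ext x
  simp only [mem_inter_iff, Function.mem_support, and_congr_left_iff]
  exact fun hx => by simp [(hg x hx).ne']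

end WeightedAverage

section Fcdf

variable {f : ℝ → ℝ} {s t : ℝ}

theorem Fcdf_eq_setIntegral_Ioc (ht : 0 ≤ t) : Fcdf f t = ∫ γ in Ioc 0 t, f γ :=
  intervalIntegral.integral_of_le ht

theorem Fcdf_nonneg (hnn : ∀ x, 0 ≤ f x) (ht : 0 ≤ t) : 0 ≤ Fcdf f t :=
  intervalIntegral.integral_nonneg ht fun x _ => hnn x

theorem Fcdf_mono (hnn : ∀ x, 0 ≤ f x) (hint : IntegrableOn f (Ioi 0)) (hs : 0 ≤ s)
    (hst : s ≤ t) : Fcdf f s ≤ Fcdf f t := by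
  rw [Fcdf_eq_setIntegral_Ioc hs, Fcdf_eq_setIntegral_Ioc (hs.trans hst)]
  exact setIntegral_mono_set (hint.mono_set Ioc_subset_Ioi_self)
    (Eventually.of_forall fun x => hnn x) (Ioc_subset_Ioc_right hst).eventuallyLE

theorem Fcdf_add_setIntegral_Ioi (hint : IntegrableOn f (Ioi 0)) (ht : 0 ≤ t) :
    Fcdf f t + ∫ γ in Ioi t, f γ = ∫ γ in Ioi 0, f γ := by
  rw [Fcdf_eq_setIntegral_Ioc ht, ← setIntegral_union (Ioc_disjoint_Ioi le_rfl)
    measurableSet_Ioi (hint.mono_set Ioc_subset_Ioi_self) (hint.mono_set (Ioi_subset_Ioi ht)),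
    Ioc_union_Ioi_eq_Ioi ht]

theorem Fcdf_le_one (hnn : ∀ x, 0 ≤ f x) (hint : IntegrableOn f (Ioi 0))
    (hone : ∫ γ in Ioi 0, f γ = 1) (ht : 0 ≤ t) : Fcdf f t ≤ 1 := by
  linarith [Fcdf_add_setIntegral_Ioi hint ht,
    setIntegral_nonneg (f := f) (μ := volume) measurableSet_Ioi fun x (_ : x ∈ Ioi t) => hnn x]

theorem tendsto_Fcdf_atTop (hint : IntegrableOn f (Ioi 0)) :
    Tendsto (Fcdf f) atTop (𝓝 (∫ γ in Ioi 0, f γ)) :=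
  intervalIntegral_tendsto_integral_Ioi 0 hint tendsto_id

end Fcdf

section ProdFcdf

variable {ι : Type*} {s : Finset ι} {F : ι → ℝ → ℝ} {t u : ι → ℝ}

theorem prod_Fcdf_mono (hnn : ∀ i ∈ s, ∀ x, 0 ≤ F i x)
    (hint : ∀ i ∈ s, IntegrableOn (F i) (Ioi 0)) (ht : ∀ i ∈ s, 0 ≤ t i)
    (htu : ∀ i ∈ s, t i ≤ u i) : ∏ i ∈ s, Fcdf (F i) (t i) ≤ ∏ i ∈ s, Fcdf (F i) (u i) :=
  Finset.prod_le_prod (fun i hi => Fcdf_nonneg (hnn i hi) (ht i hi))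
    fun i hi => Fcdf_mono (hnn i hi) (hint i hi) (ht i hi) (htu i hi)

theorem prod_Fcdf_le_one (hnn : ∀ i ∈ s, ∀ x, 0 ≤ F i x)
    (hint : ∀ i ∈ s, IntegrableOn (F i) (Ioi 0)) (hone : ∀ i ∈ s, ∫ γ in Ioi 0, F i γ = 1)
    (ht : ∀ i ∈ s, 0 ≤ t i) : ∏ i ∈ s, Fcdf (F i) (t i) ≤ 1 :=
  Finset.prod_le_one (fun i hi => Fcdf_nonneg (hnn i hi) (ht i hi))
    fun i hi => Fcdf_le_one (hnn i hi) (hint i hi) (hone i hi) (ht i hi)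

end ProdFcdf

section PowerIntegral

variable {g : ℝ → ℝ} {a : ℝ}

theorem integrableOn_one_div_sub_one_div_mul (ha : 0 < a) (hint : IntegrableOn g (Ioi 0)) :
    IntegrableOn (fun h => (1 / a - 1 / h) * g h) (Ioi a) :=
  (hint.mono_set (Ioi_subset_Ioi ha.le)).bdd_mul (c := 1 / a)
    (by fun_prop : Measurable fun h : ℝ => 1 / a - 1 / h).aestronglyMeasurable
    ((ae_restrict_mem measurableSet_Ioi).mono fun h (hh : a < h) => by
      have : 0 < 1 / h := one_div_pos.2 (ha.trans hh)
      rw [Real.norm_eq_abs, abs_of_nonneg (sub_nonneg.2 (one_div_le_one_div_of_le ha hh.le))]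
      linarith)

theorem setIntegral_Ioi_one_div_sub_one_div_mul_pos (ha : 0 < a) (hnn : ∀ x, 0 ≤ g x)
    (hint : IntegrableOn g (Ioi 0)) (hone : ∫ γ in Ioi 0, g γ = 1) (hga : Fcdf g a < 1) :
    0 < ∫ h in Ioi a, (1 / a - 1 / h) * g h :=
  setIntegral_mul_pos measurableSet_Ioi (hint.mono_set (Ioi_subset_Ioi ha.le))
    (fun x _ => hnn x) (integrableOn_one_div_sub_one_div_mul ha hint)
    (fun _ hh => sub_pos.2 (one_div_lt_one_div_of_lt ha hh))
    (by linarith [Fcdf_add_setIntegral_Ioi hint ha.le])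

theorem powerIntegral_ratio_mem_Icc {ι : Type*} (s : Finset ι) {F : ι → ℝ → ℝ} {b : ι → ℝ}
    (ha : 0 < a) (hb : ∀ i ∈ s, 0 ≤ b i) (hFnn : ∀ i ∈ s, ∀ x, 0 ≤ F i x)
    (hFint : ∀ i ∈ s, IntegrableOn (F i) (Ioi 0)) (hFone : ∀ i ∈ s, ∫ γ in Ioi 0, F i γ = 1)
    (hnn : ∀ x, 0 ≤ g x) (hint : IntegrableOn g (Ioi 0)) (hone : ∫ γ in Ioi 0, g γ = 1)
    (hga : Fcdf g a < 1) :
    (∫ h in Ioi a, (1 / a - 1 / h) * (∏ i ∈ s, Fcdf (F i) (b i / a * h)) * g h) /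
        ∫ h in Ioi a, (1 / a - 1 / h) * g h ∈ Icc (∏ i ∈ s, Fcdf (F i) (b i)) 1 := by
  set P := fun h => ∏ i ∈ s, Fcdf (F i) (b i / a * h)
  have hscale : ∀ i ∈ s, 0 ≤ b i / a := fun i hi => div_nonneg (hb i hi) ha.le
  have hP_mono : MonotoneOn P (Ioi a) := fun x hx y _ hxy =>
    prod_Fcdf_mono hFnn hFint (fun i hi => mul_nonneg (hscale i hi) (ha.trans hx).le)
      fun i hi => mul_le_mul_of_nonneg_left hxy (hscale i hi)
  have hP_mem : ∀ h ∈ Ioi a, P h ∈ Icc (∏ i ∈ s, Fcdf (F i) (b i)) 1 := fun h hh =>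
    ⟨prod_Fcdf_mono hFnn hFint hb fun i hi => by
        rw [div_mul_eq_mul_div, le_div_iff₀ ha]
        exact mul_le_mul_of_nonneg_left (le_of_lt hh) (hb i hi),
      prod_Fcdf_le_one hFnn hFint hFone fun i hi =>
        mul_nonneg (hscale i hi) (ha.trans hh).le⟩
  have hintegrand : (fun h => (1 / a - 1 / h) * P h * g h) =
      fun h => P h * ((1 / a - 1 / h) * g h) := by
    ext h; ring
  rw [hintegrand]
  exact setIntegral_mul_div_setIntegral_mem_Icc measurableSet_Ioi
    (integrableOn_one_div_sub_one_div_mul ha hint)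
    (fun h (hh : a < h) => mul_nonneg (sub_nonneg.2 (one_div_le_one_div_of_le ha hh.le)) (hnn h))
    (setIntegral_Ioi_one_div_sub_one_div_mul_pos ha hnn hint hone hga)
    (aemeasurable_restrict_of_monotoneOn measurableSet_Ioi hP_mono).aestronglyMeasurable hP_mem

end PowerIntegral

theorem mac_power_integral_asymptotic_general (K : ℕ) (k : Fin K)
    (f : Fin K → ℝ → ℝ)
    (hnn : ∀ i x, 0 ≤ f i x)
    (hint : ∀ i, IntegrableOn (f i) (Set.Ioi (0:ℝ)))
    (hone : ∀ i, ∫ γ in Set.Ioi (0:ℝ), f i γ = 1)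
    (hsupp : ∀ i, ∀ t > (0:ℝ), Fcdf (f i) t < 1)
    (lam : ℕ → Fin K → ℝ) (hlam : ∀ n i, 0 < lam n i)
    (htend : ∀ i, Tendsto (fun n => lam n i) atTop atTop) :
    Tendsto
      (fun n =>
        (∫ h in Set.Ioi (lam n k),
            (1 / lam n k - 1 / h) *
              (∏ i ∈ Finset.univ.erase k, Fcdf (f i) (lam n i / lam n k * h)) *
                f k h) /
          ∫ h in Set.Ioi (lam n k), (1 / lam n k - 1 / h) * f k h)
      atTop (nhds 1) := by
  have hlower : Tendsto (fun n => ∏ i ∈ Finset.univ.erase k, Fcdf (f i) (lam n i)) atTop (𝓝 1) := by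
    simpa [hone] using tendsto_finsetProd (Finset.univ.erase k) fun i _ =>
      (tendsto_Fcdf_atTop (hint i)).comp (htend i)
  have hratio := fun n => powerIntegral_ratio_mem_Icc (Finset.univ.erase k) (hlam n k)
    (fun i _ => (hlam n i).le) (fun i _ => hnn i) (fun i _ => hint i) (fun i _ => hone i)
    (hnn k) (hint k) (hone k) (hsupp k _ (hlam n k))
  exact tendsto_of_tendsto_of_tendsto_of_le_of_le hlower tendsto_const_nhds
    (fun n => (hratio n).1) fun n => (hratio n).2

/-- Asymptotic equivalence (E315): along any sequence of multiplier vectors all of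
whose coordinates tend to `∞`, the multi-user power constraint integral
`G_k(λ^{(n)})` of (E307) is asymptotically equal to the single-user one. -/
theorem mac_power_integral_asymptotic (K : ℕ) (hK : 1 ≤ K) (k : Fin K)
    (f : Fin K → ℝ → ℝ)
    (hmeas : ∀ i, Measurable (f i))
    (hnn : ∀ i x, 0 ≤ f i x)
    (hzero : ∀ i, ∀ x ≤ (0:ℝ), f i x = 0)
    (hint : ∀ i, IntegrableOn (f i) (Set.Ioi (0:ℝ)))
    (hone : ∀ i, ∫ γ in Set.Ioi (0:ℝ), f i γ = 1)
    (hsupp : ∀ i, ∀ t > (0:ℝ), Fcdf (f i) t < 1)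
    (lam : ℕ → Fin K → ℝ) (hlam : ∀ n i, 0 < lam n i)
    (htend : ∀ i, Tendsto (fun n => lam n i) atTop atTop) :
    Tendsto
      (fun n =>
        (∫ h in Set.Ioi (lam n k),
            (1 / lam n k - 1 / h) *
              (∏ i ∈ Finset.univ.erase k, Fcdf (f i) (lam n i / lam n k * h)) *
                f k h) /
          ∫ h in Set.Ioi (lam n k), (1 / lam n k - 1 / h) * f k h)
      atTop (nhds 1) :=
  mac_power_integral_asymptotic_general K k f hnn hint hone hsupp lam hlam htend
end
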